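/- arXiv:2412.17470 — 6 statements merged into one kernel-verified Lean document; each statement's English description precedes it below -/
import Mathlib

section
/- The linear space 𝖡 decomposes as the orthogonal direct sum 𝖡 = span(X) ⊕ {û(y) : y ∈ 𝖡}, where {û(y) : y ∈ 𝖡} is a linear subspace orthogonal to span(X). -/
open Matrix

/-- `R (XᵀX)⁻¹ Xᵀ`, the 1×n row vector whose i-th entry is `R(X'X)⁻¹xᵢ·'`. -/
noncomputable def cRow {n k : ℕ} (X : Matrix (Fin n) (Fin k) ℝ)
    (R : Matrix (Fin 1) (Fin k) ℝ) : Matrix (Fin 1) (Fin n) ℝ :=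
  R * (Xᵀ * X)⁻¹ * Xᵀ

/-- OLS estimator `β̂(y) = (X'X)⁻¹X'y`. -/
noncomputable def betaHat {n k : ℕ} (X : Matrix (Fin n) (Fin k) ℝ)
    (y : Fin n → ℝ) : Fin k → ℝ :=
  ((Xᵀ * X)⁻¹ * Xᵀ).mulVec y

/-- Residual vector `û(y) = y - Xβ̂(y)`. -/
noncomputable def uHat {n k : ℕ} (X : Matrix (Fin n) (Fin k) ℝ)
    (y : Fin n → ℝ) : Fin n → ℝ :=
  y - X.mulVec (betaHat X y)

/-- `B(y) = R(X'X)⁻¹X' diag(û₁(y),…,ûₙ(y))`, viewed as a vector in ℝⁿ. -/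
noncomputable def Bmap {n k : ℕ} (X : Matrix (Fin n) (Fin k) ℝ)
    (R : Matrix (Fin 1) (Fin k) ℝ) (y : Fin n → ℝ) : Fin n → ℝ :=
  fun i => cRow X R 0 i * uHat X y i

/-- The set `𝖡 = {y : B(y) = 0}`. -/
noncomputable def Bset {n k : ℕ} (X : Matrix (Fin n) (Fin k) ℝ)
    (R : Matrix (Fin 1) (Fin k) ℝ) : Set (Fin n → ℝ) :=
  {y | Bmap X R y = 0}

/-- `Ω̂_Het(y) = R(X'X)⁻¹X' diag(d₁û₁²(y),…,dₙûₙ²(y)) X(X'X)⁻¹R'`. -/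
noncomputable def OmegaHat {n k : ℕ} (X : Matrix (Fin n) (Fin k) ℝ)
    (R : Matrix (Fin 1) (Fin k) ℝ) (d : Fin n → ℝ) (y : Fin n → ℝ) : ℝ :=
  (R * (Xᵀ * X)⁻¹ * Xᵀ * Matrix.diagonal (fun i => d i * (uHat X y i) ^ 2) *
    X * (Xᵀ * X)⁻¹ * Rᵀ) 0 0

/-- Heteroskedasticity robust test statistic `T_Het`. -/
noncomputable def THet {n k : ℕ} (X : Matrix (Fin n) (Fin k) ℝ)
    (R : Matrix (Fin 1) (Fin k) ℝ) (d : Fin n → ℝ) (r : ℝ) (y : Fin n → ℝ) : ℝ :=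
  if OmegaHat X R d y ≠ 0 then (R.mulVec (betaHat X y) 0 - r) ^ 2 / OmegaHat X R d y
  else 0

/-- `𝔐₀^lin = {Xβ : Rβ = 0}`. -/
def M0lin {n k : ℕ} (X : Matrix (Fin n) (Fin k) ℝ)
    (R : Matrix (Fin 1) (Fin k) ℝ) : Set (Fin n → ℝ) :=
  {y | ∃ β : Fin k → ℝ, y = X.mulVec β ∧ R.mulVec β 0 = 0}

/-- `𝓥_# = span{eᵢ(n) : i ∈ 𝓘_#, eᵢ(n) ∈ 𝖡}`. -/
noncomputable def Vsharp {n k : ℕ} (X : Matrix (Fin n) (Fin k) ℝ)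
    (R : Matrix (Fin 1) (Fin k) ℝ) : Submodule ℝ (Fin n → ℝ) :=
  Submodule.span ℝ ((fun i => (Pi.single i 1 : Fin n → ℝ)) ''
    {i | cRow X R 0 i = 0 ∧ (Pi.single i 1 : Fin n → ℝ) ∈ Bset X R})

/-- `𝓛_# = span(𝔐₀^lin ∪ 𝓥_#)`. -/
noncomputable def Lsharp {n k : ℕ} (X : Matrix (Fin n) (Fin k) ℝ)
    (R : Matrix (Fin 1) (Fin k) ℝ) : Submodule ℝ (Fin n → ℝ) :=
  Submodule.span ℝ (M0lin X R ∪ (Vsharp X R : Set (Fin n → ℝ)))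


lemma isUnit_XtX {n k : ℕ} (X : Matrix (Fin n) (Fin k) ℝ) (hX : X.rank = k) :
    IsUnit (Xᵀ * X).det := by
  have h1 : (Xᵀ * X).rank = Fintype.card (Fin k) := by
    rw [Matrix.rank_transpose_mul_self, hX, Fintype.card_fin]
  have h2 : LinearMap.range (Xᵀ * X).mulVecLin = ⊤ := by
    apply Submodule.eq_top_of_finrank_eq
    rw [← Matrix.rank]
    simp [h1]
  have h3 : Function.Surjective (Xᵀ * X).mulVecLin := LinearMap.range_eq_top.mp h2
  have h4 : Function.Injective ((Xᵀ * X).mulVec) :=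
    (LinearMap.injective_iff_surjective).mpr h3
  rw [← Matrix.isUnit_iff_isUnit_det]
  exact Matrix.mulVec_injective_iff_isUnit.mp h4

lemma uHat_ortho {n k : ℕ} (X : Matrix (Fin n) (Fin k) ℝ)
    (hA : IsUnit (Xᵀ * X).det) (y : Fin n → ℝ) :
    Xᵀ.mulVec (uHat X y) = 0 := by
  have h : Xᵀ * (X * (Xᵀ * X)⁻¹) = 1 := by
    rw [← Matrix.mul_assoc, Matrix.mul_nonsing_inv _ hA]
  simp only [uHat, betaHat, mulVec_sub, mulVec_mulVec, ← Matrix.mul_assoc]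
  rw [Matrix.mul_assoc Xᵀ X, h, Matrix.one_mul, sub_self]

lemma betaHat_add {n k : ℕ} (X : Matrix (Fin n) (Fin k) ℝ)
    (hA : IsUnit (Xᵀ * X).det) (β : Fin k → ℝ) (w : Fin n → ℝ)
    (hw : Xᵀ.mulVec w = 0) :
    betaHat X (X.mulVec β + w) = β := by
  simp only [betaHat, mulVec_add, mulVec_mulVec]
  have h1 : ((Xᵀ * X)⁻¹ * Xᵀ * X).mulVec β = β := by
    rw [Matrix.mul_assoc, Matrix.nonsing_inv_mul _ hA, Matrix.one_mulVec]
  have h2 : ((Xᵀ * X)⁻¹ * Xᵀ).mulVec w = 0 := by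
    rw [← mulVec_mulVec, hw, mulVec_zero]
  rw [h2, h1, add_zero]

lemma uHat_add {n k : ℕ} (X : Matrix (Fin n) (Fin k) ℝ)
    (hA : IsUnit (Xᵀ * X).det) (β : Fin k → ℝ) (w : Fin n → ℝ)
    (hw : Xᵀ.mulVec w = 0) :
    uHat X (X.mulVec β + w) = w := by
  rw [uHat, betaHat_add X hA β w hw, add_sub_cancel_left]

lemma uHat_fix {n k : ℕ} (X : Matrix (Fin n) (Fin k) ℝ)
    (hA : IsUnit (Xᵀ * X).det) (w : Fin n → ℝ)
    (hw : Xᵀ.mulVec w = 0) : uHat X w = w := by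
  have := uHat_add X hA 0 w hw
  rwa [mulVec_zero, zero_add] at this

lemma dot_zero_of {n k : ℕ} (X : Matrix (Fin n) (Fin k) ℝ) (β : Fin k → ℝ)
    (w : Fin n → ℝ) (hw : Xᵀ.mulVec w = 0) : X.mulVec β ⬝ᵥ w = 0 := by
  rw [dotProduct_comm, dotProduct_mulVec, ← Matrix.transpose_transpose X,
    vecMul_transpose, hw, zero_dotProduct]

lemma img_eq {n k : ℕ} (X : Matrix (Fin n) (Fin k) ℝ)
    (R : Matrix (Fin 1) (Fin k) ℝ) (hA : IsUnit (Xᵀ * X).det) :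
    uHat X '' Bset X R =
      {w | Xᵀ.mulVec w = 0 ∧ ∀ i, cRow X R 0 i * w i = 0} := by
  ext w
  constructor
  · rintro ⟨y, hy, rfl⟩
    exact ⟨uHat_ortho X hA y, fun i => congrFun hy i⟩
  · rintro ⟨h1, h2⟩
    have hww : uHat X w = w := uHat_fix X hA w h1
    refine ⟨w, ?_, hww⟩
    funext i
    show cRow X R 0 i * uHat X w i = 0
    rw [hww]; exact h2 i

theorem stmt2    {n k : ℕ} (hk : 1 ≤ k) (hkn : k < n)
    (X : Matrix (Fin n) (Fin k) ℝ) (hX : X.rank = k)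
    (R : Matrix (Fin 1) (Fin k) ℝ) (hR : R ≠ 0) :
    (∃ S : Submodule ℝ (Fin n → ℝ), (S : Set (Fin n → ℝ)) = uHat X '' Bset X R) ∧
    (∀ v ∈ Set.range X.mulVec, ∀ w ∈ uHat X '' Bset X R, v ⬝ᵥ w = 0) ∧
    Bset X R = {y | ∃ v ∈ Set.range X.mulVec, ∃ w ∈ uHat X '' Bset X R, y = v + w} := by
  have hA : IsUnit (Xᵀ * X).det := isUnit_XtX X hX
  have himg := img_eq X R hA
  refine ⟨⟨LinearMap.ker (Xᵀ.mulVecLin) ⊓ ⨅ i, LinearMap.ker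
      ((cRow X R 0 i) • (LinearMap.proj i : (Fin n → ℝ) →ₗ[ℝ] ℝ)), ?_⟩, ?_, ?_⟩
  · rw [himg]
    ext w
    simp only [SetLike.mem_coe, Submodule.mem_inf, Submodule.mem_iInf, LinearMap.mem_ker,
      Matrix.mulVecLin_apply, LinearMap.smul_apply, LinearMap.proj_apply, smul_eq_mul,
      Set.mem_setOf_eq]
  · rintro v ⟨β, rfl⟩ w hw
    rw [himg] at hw
    exact dot_zero_of X β w hw.1
  · ext y
    constructor
    · intro hy
      refine ⟨X.mulVec (betaHat X y), ⟨betaHat X y, rfl⟩, uHat X y, ⟨y, hy, rfl⟩, ?_⟩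
      rw [uHat, add_sub_cancel]
    · rintro ⟨v, ⟨β, rfl⟩, w, hw, rfl⟩
      rw [himg] at hw
      funext i
      show cRow X R 0 i * uHat X (X.mulVec β + w) i = 0
      rw [uHat_add X hA β w hw.1]
      exact hw.2 i
end

section
/- The set {û(y) : y ∈ 𝖡} is a linear subspace of span{eᵢ(n) : i ∈ 𝓘_#}, where eᵢ(n) is the i-th standard basis vector of ℝⁿ and 𝓘_# = {i : R(X'X)⁻¹xᵢ·' = 0} with xᵢ· the i-th row of X. -/
open Matrix

lemma uHat_mulVec {n k : ℕ} (X : Matrix (Fin n) (Fin k) ℝ) (y : Fin n → ℝ) :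
    uHat X y = (1 - X * (Xᵀ * X)⁻¹ * Xᵀ).mulVec y := by
  simp [uHat, betaHat, Matrix.sub_mulVec, Matrix.mulVec_mulVec, Matrix.mul_assoc]

lemma inv_sandwich {n k : ℕ} (X : Matrix (Fin n) (Fin k) ℝ) :
    (Xᵀ * X)⁻¹ * (Xᵀ * X) * (Xᵀ * X)⁻¹ = (Xᵀ * X)⁻¹ := by
  by_cases h : IsUnit (Xᵀ * X).det
  · rw [Matrix.nonsing_inv_mul _ h, Matrix.one_mul]
  · simp [Matrix.nonsing_inv_apply_not_isUnit _ h]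

lemma M_idem {n k : ℕ} (X : Matrix (Fin n) (Fin k) ℝ) :
    (1 - X * (Xᵀ * X)⁻¹ * Xᵀ) * (1 - X * (Xᵀ * X)⁻¹ * Xᵀ)
      = 1 - X * (Xᵀ * X)⁻¹ * Xᵀ := by
  have hP : (X * (Xᵀ * X)⁻¹ * Xᵀ) * (X * (Xᵀ * X)⁻¹ * Xᵀ)
      = X * (Xᵀ * X)⁻¹ * Xᵀ := by
    have := inv_sandwich X
    calc (X * (Xᵀ * X)⁻¹ * Xᵀ) * (X * (Xᵀ * X)⁻¹ * Xᵀ)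
        = X * ((Xᵀ * X)⁻¹ * (Xᵀ * X) * (Xᵀ * X)⁻¹) * Xᵀ := by
          simp only [Matrix.mul_assoc]
      _ = X * (Xᵀ * X)⁻¹ * Xᵀ := by rw [this, Matrix.mul_assoc]
  simp [Matrix.sub_mul, Matrix.mul_sub, hP]

lemma uHat_idem {n k : ℕ} (X : Matrix (Fin n) (Fin k) ℝ) (y : Fin n → ℝ) :
    uHat X (uHat X y) = uHat X y := by
  rw [uHat_mulVec, uHat_mulVec, Matrix.mulVec_mulVec, M_idem]

theorem stmt3    {n k : ℕ} (hk : 1 ≤ k) (hkn : k < n)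
    (X : Matrix (Fin n) (Fin k) ℝ) (hX : X.rank = k)
    (R : Matrix (Fin 1) (Fin k) ℝ) (hR : R ≠ 0) :
    (∃ S : Submodule ℝ (Fin n → ℝ), (S : Set (Fin n → ℝ)) = uHat X '' Bset X R) ∧
    uHat X '' Bset X R ⊆
      (Submodule.span ℝ ((fun i => (Pi.single i 1 : Fin n → ℝ)) ''
        {i | cRow X R 0 i = 0}) : Set (Fin n → ℝ)) := by
  set c : Fin n → ℝ := cRow X R 0 with hc
  constructor
  · -- the image is a subspace
    refine ⟨(LinearMap.range ((1 - X * (Xᵀ * X)⁻¹ * Xᵀ).mulVecLin)) ⊓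
      (⨅ i : Fin n, LinearMap.ker ((c i) • (LinearMap.proj i :
        (Fin n → ℝ) →ₗ[ℝ] ℝ))), ?_⟩
    ext x
    simp only [SetLike.mem_coe, Submodule.mem_inf, LinearMap.mem_range,
      Submodule.mem_iInf, LinearMap.mem_ker, LinearMap.smul_apply,
      LinearMap.proj_apply, smul_eq_mul, Matrix.mulVecLin_apply]
    constructor
    · rintro ⟨⟨y, hy⟩, hker⟩
      have hx : uHat X x = x := by
        rw [← hy, ← uHat_mulVec, uHat_idem, uHat_mulVec]
      refine ⟨x, ?_, hx⟩
      show Bmap X R x = 0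
      funext i
      simpa [Bmap, hx, ← hc] using hker i
    · rintro ⟨y, hy, rfl⟩
      refine ⟨⟨y, (uHat_mulVec X y).symm⟩, fun i => ?_⟩
      have := congrFun hy i
      simpa [Bmap, ← hc] using this
  · -- containment in the span
    rintro _ ⟨y, hy, rfl⟩
    have hcoord : ∀ i, c i * uHat X y i = 0 := fun i => congrFun hy i
    have hrepr : uHat X y = ∑ i, (uHat X y i) • (Pi.single i 1 : Fin n → ℝ) := by
      funext j
      simp [Finset.sum_apply, Pi.single_apply]
    rw [hrepr]
    refine Submodule.sum_mem _ fun i _ => ?_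
    by_cases hci : c i = 0
    · exact Submodule.smul_mem _ _ (Submodule.subset_span ⟨i, hci, rfl⟩)
    · have : uHat X y i = 0 := by
        have := hcoord i
        rcases mul_eq_zero.mp this with h | h
        · exact absurd h hci
        · exact h
      simp [this]
end

section
/- If j ∉ 𝓘_#, i.e., R(X'X)⁻¹xⱼ·' ≠ 0, then the conditions eⱼ(n) ∈ span(X) and eⱼ(n) ∈ 𝖡 are equivalent. -/
open Matrix

variable {n k : ℕ}

lemma XtX_isUnit (hkn : k < n) (X : Matrix (Fin n) (Fin k) ℝ) (hX : X.rank = k) :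
    IsUnit (Xᵀ * X) := by
  -- X.mulVec is injective
  have hinj : Function.Injective X.mulVec := by
    rw [← Matrix.coe_mulVecLin]
    rw [← LinearMap.ker_eq_bot]
    have h1 := LinearMap.finrank_range_add_finrank_ker X.mulVecLin
    rw [Matrix.rank] at hX
    rw [hX] at h1
    simp only [Module.finrank_pi, Fintype.card_fin] at h1
    have h2 : Module.finrank ℝ (LinearMap.ker X.mulVecLin) = 0 := by omega
    exact Submodule.finrank_eq_zero.mp h2
  have hinj2 : Function.Injective (Xᵀ * X).mulVec := by
    rw [← Matrix.coe_mulVecLin, ← LinearMap.ker_eq_bot]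
    rw [Submodule.eq_bot_iff]
    intro v hv
    simp only [LinearMap.mem_ker, Matrix.coe_mulVecLin] at hv
    have hdot : v ⬝ᵥ (Xᵀ * X).mulVec v = (X.mulVec v) ⬝ᵥ (X.mulVec v) := by
      rw [Matrix.dotProduct_mulVec, ← Matrix.vecMul_vecMul, Matrix.vecMul_transpose,
        ← Matrix.dotProduct_mulVec]
    rw [hv, dotProduct_zero] at hdot
    have hXv : X.mulVec v = 0 := by
      have := hdot.symm
      rw [dotProduct, Finset.sum_eq_zero_iff_of_nonneg
        (fun i _ => mul_self_nonneg _)] at this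
      funext i
      have := this i (Finset.mem_univ i)
      simpa [mul_self_eq_zero] using this
    have : X.mulVec v = X.mulVec 0 := by simpa using hXv
    exact hinj this
  exact Matrix.mulVec_injective_iff_isUnit.mp hinj2

theorem stmt5    {n k : ℕ} (hk : 1 ≤ k) (hkn : k < n)
    (X : Matrix (Fin n) (Fin k) ℝ) (hX : X.rank = k)
    (R : Matrix (Fin 1) (Fin k) ℝ) (hR : R ≠ 0) :
    ∀ j : Fin n, cRow X R 0 j ≠ 0 →
      ((Pi.single j 1 : Fin n → ℝ) ∈ Set.range X.mulVec ↔
        (Pi.single j 1 : Fin n → ℝ) ∈ Bset X R) := by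
  have hM := XtX_isUnit hkn X hX
  have hdet : IsUnit (Xᵀ * X).det := (Matrix.isUnit_iff_isUnit_det _).mp hM
  have hMl : (Xᵀ * X)⁻¹ * (Xᵀ * X) = 1 := Matrix.nonsing_inv_mul _ hdet
  have hMr : (Xᵀ * X) * (Xᵀ * X)⁻¹ = 1 := Matrix.mul_nonsing_inv _ hdet
  intro j hj
  set e : Fin n → ℝ := Pi.single j 1 with he
  constructor
  · rintro ⟨β, hβ⟩
    have hu : uHat X e = 0 := by
      rw [uHat, betaHat, ← hβ]
      rw [Matrix.mulVec_mulVec, Matrix.mulVec_mulVec,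
        Matrix.mul_assoc X, Matrix.mul_assoc (Xᵀ * X)⁻¹, hMl, Matrix.mul_one, sub_self]
    show Bmap X R e = 0
    funext i
    simp [Bmap, hu]
  · intro hB
    set u : Fin n → ℝ := uHat X e with hu
    have huj : u j = 0 := by
      have := congrFun hB j
      simp only [Bmap, Pi.zero_apply] at this
      exact (mul_eq_zero.mp this).resolve_left hj
    have hXtu : Xᵀ.mulVec u = 0 := by
      rw [hu, uHat, betaHat, Matrix.mulVec_sub, Matrix.mulVec_mulVec, Matrix.mulVec_mulVec,
        ← Matrix.mul_assoc, hMr, Matrix.one_mul]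
      simp
    have hsq : u ⬝ᵥ u = u j := by
      nth_rewrite 1 [hu]
      rw [uHat, sub_dotProduct, single_dotProduct, one_mul]
      have : X.mulVec (betaHat X e) ⬝ᵥ u = 0 := by
        rw [dotProduct_comm, Matrix.dotProduct_mulVec,
          ← Matrix.mulVec_transpose, hXtu]
        simp
      rw [this, sub_zero]
    rw [huj] at hsq
    have hu0 : u = 0 := by
      rw [dotProduct, Finset.sum_eq_zero_iff_of_nonneg
        (fun i _ => mul_self_nonneg _)] at hsq
      funext i
      have := hsq i (Finset.mem_univ i)
      simpa [mul_self_eq_zero] using this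
    have : e = X.mulVec (betaHat X e) := by
      have := hu0
      rw [hu, uHat, sub_eq_zero] at this
      exact this
    exact ⟨betaHat X e, this.symm⟩
end

section
/- If 𝓘_# = {i₀} is a singleton, then either 𝖡 = span(X) (if the i₀-th row of X is nonzero) or 𝖡 = span(X) ⊕ span(e_{i₀}(n)) (if the i₀-th row of X is zero). -/
open Matrix

lemma aux_isUnit {n k : ℕ} (X : Matrix (Fin n) (Fin k) ℝ) (hX : X.rank = k) :
    IsUnit (Xᵀ * X) := by
  rw [← Matrix.mulVec_surjective_iff_isUnit]
  have hr : (Xᵀ * X).rank = k := by rw [Matrix.rank_transpose_mul_self, hX]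
  have htop : LinearMap.range (Xᵀ * X).mulVecLin = ⊤ := by
    apply Submodule.eq_top_of_finrank_eq
    rw [Module.finrank_fin_fun]
    exact hr
  intro v
  obtain ⟨w, hw⟩ := LinearMap.range_eq_top.mp htop v
  exact ⟨w, hw⟩

lemma aux_inv_mul {n k : ℕ} (X : Matrix (Fin n) (Fin k) ℝ) (hX : X.rank = k) :
    (Xᵀ * X)⁻¹ * (Xᵀ * X) = 1 :=
  Matrix.nonsing_inv_mul _ ((Matrix.isUnit_iff_isUnit_det _).mp (aux_isUnit X hX))

lemma aux_betaHat_mulVec {n k : ℕ} (X : Matrix (Fin n) (Fin k) ℝ) (hX : X.rank = k)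
    (β : Fin k → ℝ) : betaHat X (X.mulVec β) = β := by
  rw [betaHat, Matrix.mulVec_mulVec, Matrix.mul_assoc, aux_inv_mul X hX, Matrix.one_mulVec]

lemma aux_uHat_mulVec {n k : ℕ} (X : Matrix (Fin n) (Fin k) ℝ) (hX : X.rank = k)
    (β : Fin k → ℝ) : uHat X (X.mulVec β) = 0 := by
  rw [uHat, aux_betaHat_mulVec X hX, sub_self]

lemma aux_uHat_eq {n k : ℕ} (X : Matrix (Fin n) (Fin k) ℝ) (y : Fin n → ℝ) :
    uHat X y = (1 - X * ((Xᵀ * X)⁻¹ * Xᵀ)).mulVec y := by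
  rw [uHat, betaHat, Matrix.sub_mulVec, Matrix.one_mulVec, Matrix.mulVec_mulVec]

lemma aux_transpose_uHat {n k : ℕ} (X : Matrix (Fin n) (Fin k) ℝ) (hX : X.rank = k)
    (y : Fin n → ℝ) : Xᵀ.mulVec (uHat X y) = 0 := by
  have hmul : (Xᵀ * X) * (Xᵀ * X)⁻¹ = 1 :=
    Matrix.mul_nonsing_inv _ ((Matrix.isUnit_iff_isUnit_det _).mp (aux_isUnit X hX))
  rw [uHat, Matrix.mulVec_sub, betaHat, Matrix.mulVec_mulVec, Matrix.mulVec_mulVec,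
    ← Matrix.mul_assoc, hmul, Matrix.one_mul, sub_self]

theorem stmt7    {n k : ℕ} (hk : 1 ≤ k) (hkn : k < n)
    (X : Matrix (Fin n) (Fin k) ℝ) (hX : X.rank = k)
    (R : Matrix (Fin 1) (Fin k) ℝ) (hR : R ≠ 0) (i₀ : Fin n)
    (hI : {i : Fin n | cRow X R 0 i = 0} = {i₀}) :
    (X i₀ ≠ 0 → Bset X R = Set.range X.mulVec) ∧
    (X i₀ = 0 → Bset X R =
      {y | ∃ v ∈ Set.range X.mulVec, ∃ a : ℝ, y = v + a • (Pi.single i₀ 1 : Fin n → ℝ)}) := by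
  have hc : ∀ i : Fin n, cRow X R 0 i = 0 ↔ i = i₀ := by
    intro i
    have := Set.ext_iff.mp hI i
    simpa using this
  have hci₀ : cRow X R 0 i₀ = 0 := (hc i₀).mpr rfl
  have key : ∀ y ∈ Bset X R, ∀ i, i ≠ i₀ → uHat X y i = 0 := by
    intro y hy i hi
    have h1 : cRow X R 0 i * uHat X y i = 0 := by
      have := congrFun hy i
      simpa [Bmap] using this
    have h2 : cRow X R 0 i ≠ 0 := fun h => hi ((hc i).mp h)
    exact (mul_eq_zero.mp h1).resolve_left h2
  have hdecomp : ∀ y : Fin n → ℝ, ∀ i, y i = X.mulVec (betaHat X y) i + uHat X y i := by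
    intro y i; simp [uHat]
  have hmemX : ∀ y ∈ Set.range X.mulVec, y ∈ Bset X R := by
    rintro y ⟨β, rfl⟩
    show Bmap X R _ = 0
    funext i
    simp [Bmap, aux_uHat_mulVec X hX]
  constructor
  · intro hXi
    ext y
    constructor
    · intro hy
      obtain ⟨j, hj⟩ := Function.ne_iff.mp hXi
      have hT : Xᵀ.mulVec (uHat X y) j = 0 := congrFun (aux_transpose_uHat X hX y) j
      have hsum : Xᵀ.mulVec (uHat X y) j = X i₀ j * uHat X y i₀ := by
        rw [Matrix.mulVec, dotProduct]
        refine Finset.sum_eq_single i₀ (fun i _ hi => by rw [key y hy i hi, mul_zero])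
          (fun h => absurd (Finset.mem_univ i₀) h)
      have h0 : uHat X y i₀ = 0 := by
        rw [hsum] at hT
        exact (mul_eq_zero.mp hT).resolve_left hj
      have hu : uHat X y = 0 := by
        funext i
        by_cases h : i = i₀
        · rw [h]; exact h0
        · exact key y hy i h
      rw [uHat] at hu
      exact ⟨betaHat X y, (sub_eq_zero.mp hu).symm⟩
    · exact fun hy => hmemX y hy
  · intro hXi
    ext y
    constructor
    · intro hy
      refine ⟨X.mulVec (betaHat X y), ⟨_, rfl⟩, uHat X y i₀, ?_⟩
      funext i
      by_cases h : i = i₀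
      · subst h
        simp [hdecomp y i]
      · rw [Pi.add_apply, Pi.smul_apply, Pi.single_apply, if_neg h]
        rw [hdecomp y i, key y hy i h]
        simp
    · rintro ⟨v, ⟨β, rfl⟩, a, rfl⟩
      have hXe : Xᵀ.mulVec (Pi.single i₀ (1:ℝ)) = 0 := by
        rw [Matrix.mulVec_single]
        funext j
        simp [Matrix.transpose_apply, congrFun hXi j]
      have he : uHat X (Pi.single i₀ (1:ℝ)) = Pi.single i₀ (1:ℝ) := by
        rw [uHat, betaHat, ← Matrix.mulVec_mulVec, hXe, Matrix.mulVec_zero,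
          Matrix.mulVec_zero, sub_zero]
      have hlin : uHat X (X.mulVec β + a • (Pi.single i₀ 1 : Fin n → ℝ)) = a • (Pi.single i₀ 1 : Fin n → ℝ) := by
        rw [aux_uHat_eq, Matrix.mulVec_add, Matrix.mulVec_smul, ← aux_uHat_eq, ← aux_uHat_eq,
          aux_uHat_mulVec X hX, he, zero_add]
      show Bmap X R _ = 0
      funext i
      rw [Bmap, hlin]
      by_cases h : i = i₀
      · subst h; simp [hci₀]
      · simp [Pi.single_apply, Ne.symm h]
end

section
/- The heteroskedasticity-robust test statistic T_Het is invariant under addition of any z ∈ 𝖡 satisfying Rβ̂(z) = 0, i.e., T_Het(y + z) = T_Het(y) for all y ∈ ℝⁿ. -/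
open Matrix

lemma omega_eq_sum {n k : ℕ} (X : Matrix (Fin n) (Fin k) ℝ)
    (R : Matrix (Fin 1) (Fin k) ℝ) (d : Fin n → ℝ) (y : Fin n → ℝ) :
    OmegaHat X R d y = ∑ i, d i * (cRow X R 0 i * uHat X y i) ^ 2 := by
  have hM : X * (Xᵀ * X)⁻¹ * Rᵀ = (cRow X R)ᵀ := by
    simp [cRow, Matrix.transpose_mul, Matrix.transpose_nonsing_inv, Matrix.mul_assoc]
  have h1 : OmegaHat X R d y =
      (cRow X R * Matrix.diagonal (fun i => d i * (uHat X y i) ^ 2) *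
        (X * (Xᵀ * X)⁻¹ * Rᵀ)) 0 0 := by
    simp [OmegaHat, cRow, Matrix.mul_assoc]
  rw [h1, hM, Matrix.mul_apply]
  apply Finset.sum_congr rfl
  intro i _
  simp [Matrix.mul_apply, Matrix.diagonal, Matrix.transpose_apply, Finset.mul_sum]
  ring

lemma uHat_add_s10 {n k : ℕ} (X : Matrix (Fin n) (Fin k) ℝ) (y z : Fin n → ℝ) :
    uHat X (y + z) = uHat X y + uHat X z := by
  simp [uHat, betaHat, Matrix.mulVec_add]
  abel

theorem stmt10    {n k : ℕ} (hk : 1 ≤ k) (hkn : k < n)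
    (X : Matrix (Fin n) (Fin k) ℝ) (hX : X.rank = k)
    (R : Matrix (Fin 1) (Fin k) ℝ) (hR : R ≠ 0)
    (d : Fin n → ℝ) (hd : ∀ i, 0 < d i) (r : ℝ) :
    ∀ z ∈ Bset X R, R.mulVec (betaHat X z) 0 = 0 →
      ∀ y : Fin n → ℝ, THet X R d r (y + z) = THet X R d r y := by
  intro z hz hRz y
  have hB : ∀ i, cRow X R 0 i * uHat X z i = 0 := fun i => congrFun hz i
  have hu : ∀ i, cRow X R 0 i * uHat X (y + z) i = cRow X R 0 i * uHat X y i := by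
    intro i
    rw [uHat_add_s10]
    simp [mul_add, hB i]
  have hOmega : OmegaHat X R d (y + z) = OmegaHat X R d y := by
    rw [omega_eq_sum, omega_eq_sum]
    exact Finset.sum_congr rfl (fun i _ => by rw [hu i])
  have hbeta : R.mulVec (betaHat X (y + z)) 0 = R.mulVec (betaHat X y) 0 := by
    simp [betaHat, Matrix.mulVec_add, hRz]
    have := hRz
    simp [betaHat] at this
    simp [this]
  simp [THet, hOmega, hbeta]
end

section
/- T_Het is invariant under addition of elements of 𝓛_# = span(𝔐₀^lin ∪ 𝓥_#), where 𝔐₀^lin = {Xβ : Rβ = 0} and 𝓥_# = span{eᵢ(n) : i ∈ 𝓘_#, eᵢ(n) ∈ 𝖡}. -/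
open Matrix

section MyAux

variable {n k : ℕ} (X : Matrix (Fin n) (Fin k) ℝ) (R : Matrix (Fin 1) (Fin k) ℝ)

lemma my_betaHat_add (y z : Fin n → ℝ) :
    betaHat X (y + z) = betaHat X y + betaHat X z := by
  simp [betaHat, Matrix.mulVec_add]

lemma my_betaHat_smul (a : ℝ) (z : Fin n → ℝ) :
    betaHat X (a • z) = a • betaHat X z := by
  simp [betaHat, Matrix.mulVec_smul]

lemma my_uHat_add (y z : Fin n → ℝ) :
    uHat X (y + z) = uHat X y + uHat X z := by
  simp only [uHat, my_betaHat_add, Matrix.mulVec_add]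
  abel

lemma my_uHat_smul (a : ℝ) (z : Fin n → ℝ) :
    uHat X (a • z) = a • uHat X z := by
  simp only [uHat, my_betaHat_smul, Matrix.mulVec_smul, smul_sub]

lemma my_uHat_zero : uHat X (0 : Fin n → ℝ) = 0 := by
  simp [uHat, betaHat, Matrix.mulVec_zero]

lemma my_num (z : Fin n → ℝ) :
    R.mulVec (betaHat X z) = (cRow X R).mulVec z := by
  simp [betaHat, cRow, Matrix.mulVec_mulVec, Matrix.mul_assoc]

lemma my_inv_symm : ((Xᵀ * X)⁻¹)ᵀ = (Xᵀ * X)⁻¹ := by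
  rw [Matrix.transpose_nonsing_inv, Matrix.transpose_mul, Matrix.transpose_transpose]

lemma my_Omega_eq (d : Fin n → ℝ) (y : Fin n → ℝ) :
    OmegaHat X R d y =
      ∑ j, d j * (cRow X R 0 j) ^ 2 * (uHat X y j) ^ 2 := by
  have key : R * (Xᵀ * X)⁻¹ * Xᵀ *
      Matrix.diagonal (fun i => d i * (uHat X y i) ^ 2) * X * (Xᵀ * X)⁻¹ * Rᵀ
      = (cRow X R) * Matrix.diagonal (fun i => d i * (uHat X y i) ^ 2) * (cRow X R)ᵀ := by
    simp [cRow, Matrix.transpose_mul, my_inv_symm, Matrix.transpose_transpose,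
      Matrix.mul_assoc]
  unfold OmegaHat
  rw [key, Matrix.mul_apply]
  refine Finset.sum_congr rfl fun j _ => ?_
  rw [Matrix.mul_diagonal, Matrix.transpose_apply]
  ring

end MyAux

theorem stmt11    {n k : ℕ} (hk : 1 ≤ k) (hkn : k < n)
    (X : Matrix (Fin n) (Fin k) ℝ) (hX : X.rank = k)
    (R : Matrix (Fin 1) (Fin k) ℝ) (hR : R ≠ 0)
    (d : Fin n → ℝ) (hd : ∀ i, 0 < d i) (r : ℝ) :
    ∀ z ∈ (Lsharp X R : Set (Fin n → ℝ)),
      ∀ y : Fin n → ℝ, THet X R d r (y + z) = THet X R d r y := by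
  classical
  -- `XᵀX` is invertible since `X` has full column rank.
  have hdet : IsUnit (Xᵀ * X).det := by
    have hker : LinearMap.ker X.mulVecLin = ⊥ := by
      have h2 := LinearMap.finrank_range_add_finrank_ker X.mulVecLin
      have h3 : Module.finrank ℝ (LinearMap.ker X.mulVecLin) = 0 := by
        have hr : Module.finrank ℝ (LinearMap.range X.mulVecLin) = k := hX
        have hfk : Module.finrank ℝ (Fin k → ℝ) = k := by simp
        omega
      exact Submodule.finrank_eq_zero.mp h3
    have hker2 : LinearMap.ker (Xᵀ * X).mulVecLin = ⊥ :=
      (Matrix.ker_mulVecLin_transpose_mul_self X).trans hker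
    have hinj : Function.Injective ((Xᵀ * X).mulVec) := by
      have := LinearMap.ker_eq_bot.mp hker2
      simpa only [Matrix.coe_mulVecLin] using this
    exact (Matrix.isUnit_iff_isUnit_det _).mp (Matrix.mulVec_injective_iff_isUnit.mp hinj)
  have hinvmul : (Xᵀ * X)⁻¹ * (Xᵀ * X) = 1 := Matrix.nonsing_inv_mul _ hdet
  -- the key invariance properties hold on all of `Lsharp`
  have key : ∀ z ∈ Lsharp X R,
      (∀ j, cRow X R 0 j * uHat X z j = 0) ∧ (cRow X R).mulVec z 0 = 0 := by
    have hLs : Lsharp X R = Submodule.span ℝ (M0lin X R ∪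
        ((fun i => (Pi.single i 1 : Fin n → ℝ)) ''
          {i | cRow X R 0 i = 0 ∧ (Pi.single i 1 : Fin n → ℝ) ∈ Bset X R})) := by
      unfold Lsharp Vsharp
      rw [Submodule.span_union, Submodule.span_union, Submodule.span_span]
    intro z hz
    rw [hLs] at hz
    induction hz using Submodule.span_induction with
    | mem x hx =>
      rcases hx with hx | hx
      · obtain ⟨β, rfl, hRβ⟩ := hx
        have hbeta : betaHat X (X.mulVec β) = β := by
          rw [betaHat, Matrix.mulVec_mulVec, Matrix.mul_assoc, hinvmul, Matrix.one_mulVec]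
        have huz : uHat X (X.mulVec β) = 0 := by
          rw [uHat, hbeta, sub_self]
        constructor
        · intro j; rw [huz]; simp
        · have : (cRow X R).mulVec (X.mulVec β) = R.mulVec β := by
            simp only [Matrix.mulVec_mulVec, cRow, Matrix.mul_assoc, hinvmul,
              Matrix.mul_one]
          rw [this, hRβ]
      · obtain ⟨i, ⟨hci, hBi⟩, rfl⟩ := hx
        constructor
        · intro j
          have := congrFun hBi j
          simpa [Bmap] using this
        · simp [Matrix.mulVec_single, hci]
    | zero =>
      constructor
      · intro j; rw [my_uHat_zero]; simp
      · simp
    | add x y' hx hy' ihx ihy =>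
      constructor
      · intro j
        have h1 := ihx.1 j
        have h2 := ihy.1 j
        have : uHat X (x + y') j = uHat X x j + uHat X y' j := by
          rw [my_uHat_add]; rfl
        rw [this, mul_add, h1, h2, add_zero]
      · simp [Matrix.mulVec_add, ihx.2, ihy.2]
    | smul a x hx ihx =>
      constructor
      · intro j
        have : uHat X (a • x) j = a * uHat X x j := by
          rw [my_uHat_smul]; rfl
        rw [this, ← mul_assoc, mul_comm (cRow X R 0 j) a, mul_assoc, ihx.1 j, mul_zero]
      · simp [Matrix.mulVec_smul, ihx.2]
  intro z hz y
  obtain ⟨hB, hc⟩ := key z hz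
  have hnum : R.mulVec (betaHat X (y + z)) 0 = R.mulVec (betaHat X y) 0 := by
    rw [my_betaHat_add, Matrix.mulVec_add, Pi.add_apply, my_num X R z, hc, add_zero]
  have hOm : OmegaHat X R d (y + z) = OmegaHat X R d y := by
    rw [my_Omega_eq, my_Omega_eq]
    refine Finset.sum_congr rfl fun j _ => ?_
    have h1 : uHat X (y + z) j = uHat X y j + uHat X z j := by
      rw [my_uHat_add]; rfl
    rw [h1]
    linear_combination (d j * (2 * cRow X R 0 j * uHat X y j +
      cRow X R 0 j * uHat X z j)) * hB j
  unfold THet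
  rw [hOm, hnum]
end
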